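/- Let n ≥ 2 and λ > 0, and define v_0 : ℝ^{n+1}_+ → ℝ by v_0(z̄, z_{n+1}) = (2λ/(|z̄|² + (z_{n+1} + λ)²))^{(n-1)/2}. Then v_0 is harmonic in the open upper half-space {z_{n+1} > 0}, and on the boundary it satisfies (2/(n-1))·(∂v_0/∂z_{n+1})(z̄, 0) + v_0(z̄, 0)^{(n+1)/(n-1)} = 0 for every z̄ ∈ ℝⁿ. -/

import Mathlib

open MeasureTheory Metric Filter

noncomputable section

/-- The Euclidean Laplacian of a function on `ℝ^m`. -/
def lap {m : ℕ} (u : EuclideanSpace ℝ (Fin m) → ℝ) (x : EuclideanSpace ℝ (Fin m)) : ℝ :=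
  ∑ i, fderiv ℝ (fun y => fderiv ℝ u y (EuclideanSpace.single i 1)) x (EuclideanSpace.single i 1)

/-- The standard bubble `v₀(z̄, z_{n+1}) = (2λ/(|z̄|² + (z_{n+1} + λ)²))^{(n-1)/2}`. -/
def bubble (n : ℕ) (lam : ℝ) (z : EuclideanSpace ℝ (Fin (n + 1))) : ℝ :=
  (2 * lam / ((∑ i : Fin n, z (Fin.castSucc i) ^ 2) + (z (Fin.last n) + lam) ^ 2)) ^
    (((n : ℝ) - 1) / 2)

/-! The bubble is `(2λ)^{(n-1)/2} |z - p|^{1-n}` with `p = (0, -λ)` below the boundary, i.e. a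
multiple of the fundamental solution `|z - p|^{2-m}` of the Laplacian on `ℝ^m`, `m = n + 1`.
For `|z - p|^{2c}` the Laplacian is `2c (m + 2(c - 1)) |z - p|^{2(c-1)}`, which vanishes at
`c = 1 - m/2`. On `{z_{n+1} = 0}` one has `∂_{n+1} |z - p|² = 2λ`, and writing
`s = 2λ/|z - p|²` the boundary equation becomes `-s^{(n+1)/2} + s^{(n+1)/2} = 0`. -/

open Real

section RadialPower

variable {m : ℕ} (p : EuclideanSpace ℝ (Fin m)) (K c : ℝ)

theorem hasFDerivAt_norm_sub_sq (z : EuclideanSpace ℝ (Fin m)) :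
    HasFDerivAt (fun y => ‖y - p‖ ^ 2) (2 • innerSL ℝ (z - p)) z := by
  simpa using ((hasFDerivAt_id z).sub_const p).norm_sq

theorem innerSL_sub_single (z : EuclideanSpace ℝ (Fin m)) (j : Fin m) :
    innerSL ℝ (z - p) (EuclideanSpace.single j 1) = z j - p j := by
  simp [EuclideanSpace.inner_single_right]

theorem fderiv_mul_rpow_norm_sub_sq_single {z : EuclideanSpace ℝ (Fin m)} (hz : z ≠ p)
    (j : Fin m) :
    fderiv ℝ (fun y => K * (‖y - p‖ ^ 2) ^ c) z (EuclideanSpace.single j 1) =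
      2 * K * c * (‖z - p‖ ^ 2) ^ (c - 1) * (z j - p j) := by
  have hpos : ‖z - p‖ ^ 2 ≠ 0 := by simpa [sub_eq_zero] using hz
  rw [(((hasFDerivAt_norm_sub_sq p z).rpow_const (Or.inl hpos)).const_mul K).fderiv]
  simp only [smul_apply, innerSL_sub_single, smul_eq_mul]
  ring

theorem fderiv_fderiv_mul_rpow_norm_sub_sq_single {z : EuclideanSpace ℝ (Fin m)} (hz : z ≠ p)
    (j : Fin m) :
    fderiv ℝ (fun y => fderiv ℝ (fun y => K * (‖y - p‖ ^ 2) ^ c) y (EuclideanSpace.single j 1))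
        z (EuclideanSpace.single j 1) =
      2 * K * c *
        ((‖z - p‖ ^ 2) ^ (c - 1) + 2 * (c - 1) * (‖z - p‖ ^ 2) ^ (c - 2) * (z j - p j) ^ 2) := by
  have hfirst : (fun y => 2 * K * c * ((‖y - p‖ ^ 2) ^ (c - 1) * (y j - p j))) =ᶠ[nhds z]
      fun y => fderiv ℝ (fun y => K * (‖y - p‖ ^ 2) ^ c) y
        (EuclideanSpace.single j 1) := by
    filter_upwards [eventually_ne_nhds hz] with y hy
    rw [fderiv_mul_rpow_norm_sub_sq_single p K c hy]
    ring
  have hpos : ‖z - p‖ ^ 2 ≠ 0 := by simpa [sub_eq_zero] using hz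
  have hcoord : HasFDerivAt (fun y : EuclideanSpace ℝ (Fin m) => y j - p j)
      (EuclideanSpace.proj j : EuclideanSpace ℝ (Fin m) →L[ℝ] ℝ) z :=
    (EuclideanSpace.proj (𝕜 := ℝ) j).hasFDerivAt.sub_const (p j)
  rw [← hfirst.fderiv_eq,
    ((((hasFDerivAt_norm_sub_sq p z).rpow_const (Or.inl hpos)).fun_mul hcoord).const_mul _).fderiv]
  simp only [smul_apply, add_apply, innerSL_sub_single, smul_eq_mul, PiLp.proj_apply,
    PiLp.single_eq_same, show c - 1 - 1 = c - 2 by ring]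
  ring

theorem lap_mul_rpow_norm_sub_sq {z : EuclideanSpace ℝ (Fin m)} (hz : z ≠ p) :
    lap (fun y => K * (‖y - p‖ ^ 2) ^ c) z =
      2 * K * c * (m + 2 * (c - 1)) * (‖z - p‖ ^ 2) ^ (c - 1) := by
  have hpos : 0 < ‖z - p‖ ^ 2 := by positivity [sub_ne_zero.mpr hz]
  have hsum : ∑ j, (z j - p j) ^ 2 = ‖z - p‖ ^ 2 := by
    simp [EuclideanSpace.norm_sq_eq]
  have hpow : (‖z - p‖ ^ 2) ^ (c - 2) * ‖z - p‖ ^ 2 = (‖z - p‖ ^ 2) ^ (c - 1) := by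
    rw [← rpow_add_one hpos.ne']; ring_nf
  simp only [lap, fderiv_fderiv_mul_rpow_norm_sub_sq_single p K c hz, ← Finset.mul_sum,
    Finset.sum_add_distrib, hsum, Finset.sum_const, Finset.card_univ,
    Fintype.card_fin, nsmul_eq_mul]
  linear_combination 4 * K * c * (c - 1) * hpow

end RadialPower

section Bubble

variable {n : ℕ} {lam : ℝ}

theorem ne_single_last_of_lt {z : EuclideanSpace ℝ (Fin (n + 1))} (hz : -lam < z (Fin.last n)) :
    z ≠ EuclideanSpace.single (Fin.last n) (-lam) := by
  rintro rfl
  simp at hz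

theorem norm_sub_single_last_sq (z : EuclideanSpace ℝ (Fin (n + 1))) :
    ‖z - EuclideanSpace.single (Fin.last n) (-lam)‖ ^ 2 =
      (∑ i : Fin n, z (Fin.castSucc i) ^ 2) + (z (Fin.last n) + lam) ^ 2 := by
  rw [EuclideanSpace.norm_sq_eq, Fin.sum_univ_castSucc]
  simp [(Fin.castSucc_lt_last _).ne]

theorem bubble_eq_mul_rpow_norm_sub_sq (hlam : 0 ≤ lam) :
    bubble n lam = fun z => (2 * lam) ^ (((n : ℝ) - 1) / 2) *
      (‖z - EuclideanSpace.single (Fin.last n) (-lam)‖ ^ 2) ^ (-(((n : ℝ) - 1) / 2)) := by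
  funext z
  rw [bubble, ← norm_sub_single_last_sq, div_rpow (by positivity) (by positivity),
    rpow_neg (by positivity), div_eq_mul_inv]

theorem lap_bubble (hlam : 0 ≤ lam) {z : EuclideanSpace ℝ (Fin (n + 1))}
    (hz : z ≠ EuclideanSpace.single (Fin.last n) (-lam)) : lap (bubble n lam) z = 0 := by
  rw [bubble_eq_mul_rpow_norm_sub_sq hlam, lap_mul_rpow_norm_sub_sq _ _ _ hz]
  push_cast
  ring

theorem bubble_boundary_equation (hn : n ≠ 1) (hlam : 0 < lam)
    {z : EuclideanSpace ℝ (Fin (n + 1))} (hz : z (Fin.last n) = 0) :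
    (2 / ((n : ℝ) - 1)) * fderiv ℝ (bubble n lam) z (EuclideanSpace.single (Fin.last n) 1) +
      bubble n lam z ^ (((n : ℝ) + 1) / ((n : ℝ) - 1)) = 0 := by
  set p : EuclideanSpace ℝ (Fin (n + 1)) := EuclideanSpace.single (Fin.last n) (-lam)
  have hp : p (Fin.last n) = -lam := by simp [p]
  have hzp : z ≠ p := ne_single_last_of_lt (by linarith)
  have hQ : 0 < ‖z - p‖ ^ 2 := by positivity [sub_ne_zero.mpr hzp]
  have hn' : (n : ℝ) - 1 ≠ 0 := sub_ne_zero.mpr (by exact_mod_cast hn)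
  rw [bubble_eq_mul_rpow_norm_sub_sq hlam.le, fderiv_mul_rpow_norm_sub_sq_single _ _ _ hzp, hz, hp]
  beta_reduce
  set a : ℝ := ((n : ℝ) - 1) / 2
  set Q := ‖z - p‖ ^ 2
  have hs : 0 < 2 * lam := by positivity
  have hab : a * (((n : ℝ) + 1) / ((n : ℝ) - 1)) = a + 1 := by field_simp; ring
  rw [mul_rpow (rpow_nonneg hs.le a) (rpow_nonneg hQ.le _), ← rpow_mul hs.le, ← rpow_mul hQ.le,
    neg_mul, hab, rpow_add_one hs.ne', neg_add']
  field_simp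
  ring

end Bubble

/-- **The standard bubble solves the limit problem.** For `λ > 0`, the function
`v₀(z̄, z_{n+1}) = (2λ/(|z̄|² + (z_{n+1} + λ)²))^{(n-1)/2}` is harmonic in the open upper
half-space, and on the boundary `{z_{n+1} = 0}` it satisfies
`(2/(n-1)) ∂v₀/∂z_{n+1} + v₀^{(n+1)/(n-1)} = 0`. -/
theorem bubble_harmonic_and_boundary_equation
    (n : ℕ) (hn : 2 ≤ n) (lam : ℝ) (hlam : 0 < lam) :
    (∀ z : EuclideanSpace ℝ (Fin (n + 1)), 0 < z (Fin.last n) → lap (bubble n lam) z = 0) ∧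
    (∀ z : EuclideanSpace ℝ (Fin (n + 1)), z (Fin.last n) = 0 →
      (2 / ((n : ℝ) - 1)) *
          fderiv ℝ (bubble n lam) z (EuclideanSpace.single (Fin.last n) 1) +
        bubble n lam z ^ (((n : ℝ) + 1) / ((n : ℝ) - 1)) = 0) :=
  ⟨fun _ hz => lap_bubble hlam.le (ne_single_last_of_lt (by linarith)),
    fun _ hz => bubble_boundary_equation (by omega) hlam hz⟩
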